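/- arXiv:math/0407057 — 2 statements merged into one kernel-verified Lean document; each statement's English description precedes it below -/
import Mathlib

section
/- For each route i, the i-th component Λ_i(·) of the bandwidth allocation is continuous on the set {n ∈ ℝ₊^I : n_i > 0}. -/
open Real Set

noncomputable section

/-- Feasible set for the bandwidth allocation problem at state `n`: the vector
`Λ⁺ = (Λ_i : i ∈ I₊(n))` is embedded in `ℝ^I` by requiring `L i = 0` whenever `n i = 0`. -/
def Feasible {I J : ℕ} (A : Fin J → Fin I → ℝ) (C : Fin J → ℝ)
    (n : Fin I → ℝ) : Set (Fin I → ℝ) :=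
  {L | (∀ i, 0 ≤ L i) ∧ (∀ i, n i = 0 → L i = 0) ∧ ∀ j, ∑ i, A j i * L i ≤ C j}

/-- The objective `G_n(Λ⁺)`, taking the value `⊥ = -∞` when `α ≥ 1` and some
coordinate of `Λ⁺` in `I₊(n)` vanishes. -/
def Gfun {I : ℕ} (α : ℝ) (κ : Fin I → ℝ) (n L : Fin I → ℝ) : EReal :=
  if 1 ≤ α ∧ ∃ i, 0 < n i ∧ L i = 0 then ⊥
  else if α = 1 then
    ((∑ i, if 0 < n i then κ i * n i * Real.log (L i) else 0 : ℝ) : EReal)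
  else
    ((∑ i, if 0 < n i then κ i * n i ^ α * L i ^ (1 - α) / (1 - α) else 0 : ℝ) : EReal)

/-- `L` is an optimal weighted α-fair bandwidth allocation for the state `n`,
i.e. a maximizer of `G_n` over the feasible set for `n` (with `L i = 0` for `i ∈ I₀(n)`). -/
def IsAlloc {I J : ℕ} (A : Fin J → Fin I → ℝ) (C : Fin J → ℝ) (α : ℝ)
    (κ : Fin I → ℝ) (n L : Fin I → ℝ) : Prop :=
  L ∈ Feasible A C n ∧ ∀ L' ∈ Feasible A C n, Gfun α κ n L' ≤ Gfun α κ n L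

/-- `f` is absolutely continuous on `[0, T]` for every `T > 0` (ε-δ definition with
finitely many pairwise disjoint subintervals). -/
def AbsContNonneg (f : ℝ → ℝ) : Prop :=
  ∀ T > (0:ℝ), ∀ ε > (0:ℝ), ∃ δ > (0:ℝ), ∀ (m : ℕ) (a b : Fin m → ℝ),
    (∀ k, 0 ≤ a k ∧ a k ≤ b k ∧ b k ≤ T) →
    (∀ k l, k < l → b k ≤ a l ∨ b l ≤ a k) →
    (∑ k, (b k - a k)) < δ → (∑ k, |f (b k) - f (a k)|) < ε

/-- Fluid model solution: `n : [0,∞) → ℝ₊^I` absolutely continuous, and at every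
regular point `t` the derivative conditions (13) and capacity condition (14) hold. -/
def IsFluidSol {I J : ℕ} (A : Fin J → Fin I → ℝ) (C : Fin J → ℝ)
    (ν μ : Fin I → ℝ) (Λ : (Fin I → ℝ) → Fin I → ℝ)
    (n : ℝ → Fin I → ℝ) : Prop :=
  (∀ i, AbsContNonneg fun t => n t i) ∧
  (∀ t ∈ Ici (0:ℝ), ∀ i, 0 ≤ n t i) ∧
  ∀ t ∈ Ici (0:ℝ),
    (∀ i, DifferentiableWithinAt ℝ (fun s => n s i) (Ici 0) t) →
    (∀ i, (0 < n t i →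
        HasDerivWithinAt (fun s => n s i) (ν i - μ i * Λ (n t) i) (Ici 0) t) ∧
      (n t i = 0 → HasDerivWithinAt (fun s => n s i) 0 (Ici 0) t)) ∧
    ∀ j, (∑ i, A j i * (if 0 < n t i then Λ (n t) i else ν i / μ i)) ≤ C j

/-- The set `J*` of critically loaded resources. -/
def Jstar {I J : ℕ} (A : Fin J → Fin I → ℝ) (C : Fin J → ℝ)
    (ν μ : Fin I → ℝ) : Set (Fin J) :=
  {j | ∑ i, A j i * (ν i / μ i) = C j}

/-- The workload map `w(n)`. -/
def wl {I J : ℕ} (A : Fin J → Fin I → ℝ) (μ : Fin I → ℝ)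
    (n : Fin I → ℝ) : Fin J → ℝ :=
  fun j => ∑ i, A j i * n i / μ i

/-- Feasible set of the workload optimization problem (22) for workload `w`. -/
def WFeasible {I J : ℕ} (A : Fin J → Fin I → ℝ) (C : Fin J → ℝ)
    (ν μ : Fin I → ℝ) (w : Fin J → ℝ) : Set (Fin I → ℝ) :=
  {m | (∀ i, 0 ≤ m i) ∧ ∀ j ∈ Jstar A C ν μ, w j ≤ ∑ i, A j i * m i / μ i}

/-- The Lyapunov function `F`. -/
def Ffun {I : ℕ} (α : ℝ) (κ ν μ : Fin I → ℝ) (n : Fin I → ℝ) : ℝ :=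
  (1 / (α + 1)) * ∑ i, ν i * κ i * μ i ^ (α - 1) * (n i / ν i) ^ (α + 1)

/-- The function `K` (the derivative of `F` along fluid model solutions). -/
def Kfun {I : ℕ} (α : ℝ) (κ ν μ : Fin I → ℝ)
    (Λ : (Fin I → ℝ) → Fin I → ℝ) (n : Fin I → ℝ) : ℝ :=
  ∑ i, if 0 < n i then κ i * (μ i * n i / ν i) ^ α * (ν i / μ i - Λ n i) else 0

/-! Berge-type argument. Along an ultrafilter converging to `n₀` inside the orthant, the
allocations `Λ n` converge, by compactness of the capacity region, to some `L`. Fix a strictly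
positive rate vector `g` allowed by the capacities. For every `r > L` we eventually have
`G_n(g) ≤ G_n(Λ n) ≤ G_n(r)`, hence `G_{n₀}(g) ≤ G_{n₀}(r)` in the limit. Letting one coordinate
of `r` in `I₊(n₀)` tend to `0` shows that `L` is positive on `I₊(n₀)` when `α ≥ 1`; letting
`r ↓ L` gives `G_{n₀}(g) ≤ G_{n₀}(L)`, and mixing with `g` extends this to every feasible rate
vector. So `L` restricted to `I₊(n₀)` is optimal for `n₀`, and strict concavity of `G_{n₀}` in the
coordinates of `I₊(n₀)` forces it to agree with `Λ n₀` there, in particular at `i`. -/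

open Filter Topology

def fairUtil (α x : ℝ) : ℝ := if α = 1 then log x else x ^ (1 - α) / (1 - α)

/-- Real-valued form of `G_n`: the terms with `n_k = 0` vanish because `0 ^ α = 0`, so no
restriction to `I₊(n)` is needed. -/
def totalUtil {I : ℕ} (α : ℝ) (κ n L : Fin I → ℝ) : ℝ :=
  ∑ k, κ k * n k ^ α * fairUtil α (L k)

def capacityRegion {I J : ℕ} (A : Fin J → Fin I → ℝ) (C : Fin J → ℝ) : Set (Fin I → ℝ) :=
  {L | (∀ i, 0 ≤ L i) ∧ ∀ j, ∑ i, A j i * L i ≤ C j}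

section
variable {α : ℝ} {I J : ℕ} {A : Fin J → Fin I → ℝ} {C : Fin J → ℝ} {κ : Fin I → ℝ}
  {n L M : Fin I → ℝ}

lemma fairUtil_le_fairUtil (hα : 0 < α) {x y : ℝ} (hx : 0 ≤ x) (hxα : 1 ≤ α → 0 < x)
    (hxy : x ≤ y) : fairUtil α x ≤ fairUtil α y := by
  unfold fairUtil
  rcases lt_trichotomy α 1 with h | rfl | h
  · simp only [if_neg h.ne]
    exact div_le_div_of_nonneg_right (rpow_le_rpow hx hxy (by linarith)) (by linarith)
  · simpa using log_le_log (hxα le_rfl) hxy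
  · simp only [if_neg h.ne']
    rw [div_le_div_right_of_neg (by linarith)]
    exact rpow_le_rpow_of_nonpos (hxα h.le) hxy (by linarith)

lemma continuousAt_fairUtil {x : ℝ} (hxα : 1 ≤ α → 0 < x) :
    ContinuousAt (fairUtil α) x := by
  unfold fairUtil
  rcases eq_or_ne α 1 with rfl | h
  · simpa using continuousAt_log (hxα le_rfl).ne'
  · simp only [if_neg h]
    refine (continuousAt_rpow_const x (1 - α) ?_).div_const _
    rcases lt_or_ge α 1 with h1 | h1
    · exact Or.inr (by linarith)
    · exact Or.inl (hxα h1).ne'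

lemma tendsto_fairUtil_nhdsGT_zero (h1 : 1 ≤ α) : Tendsto (fairUtil α) (𝓝[>] 0) atBot := by
  unfold fairUtil
  rcases h1.eq_or_lt with rfl | h1
  · simpa using tendsto_log_nhdsGT_zero
  · simp only [if_neg h1.ne']
    exact (tendsto_rpow_neg_nhdsGT_zero (by linarith)).atTop_div_const_of_neg (by linarith)

lemma strictConcaveOn_fairUtil_Ici (hα : 0 < α) (h1 : α < 1) :
    StrictConcaveOn ℝ (Ici 0) (fairUtil α) := by
  have hp : 0 < 1 - α := by linarith
  refine ⟨convex_Ici 0, fun x hx y hy hxy a b ha hb hab => ?_⟩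
  have key := (strictConcaveOn_rpow hp (by linarith)).2 hx hy hxy ha hb hab
  simp only [fairUtil, if_neg h1.ne, smul_eq_mul] at key ⊢
  calc a * (x ^ (1 - α) / (1 - α)) + b * (y ^ (1 - α) / (1 - α))
      = (a * x ^ (1 - α) + b * y ^ (1 - α)) / (1 - α) := by ring
    _ < (a * x + b * y) ^ (1 - α) / (1 - α) := div_lt_div_of_pos_right key hp

lemma strictConcaveOn_fairUtil_Ioi (hα : 0 < α) : StrictConcaveOn ℝ (Ioi 0) (fairUtil α) := by
  rcases lt_trichotomy α 1 with h1 | rfl | h1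
  · exact (strictConcaveOn_fairUtil_Ici hα h1).subset Ioi_subset_Ici_self (convex_Ioi 0)
  · convert strictConcaveOn_log_Ioi using 1
    funext x; simp [fairUtil]
  have hp : 1 - α ≠ 0 := by linarith
  have hfun : fairUtil α = fun x => x ^ (1 - α) / (1 - α) := by
    funext x; simp [fairUtil, h1.ne']
  refine strictConcaveOn_of_deriv2_neg (convex_Ioi 0)
    (fun x hx => (continuousAt_fairUtil fun _ => hx).continuousWithinAt)
    fun x hx => ?_
  rw [interior_Ioi] at hx
  have hderiv : deriv (fairUtil α) =ᶠ[𝓝 x] fun y => y ^ (-α) := by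
    filter_upwards [isOpen_Ioi.mem_nhds hx] with y hy
    rw [hfun, deriv_div_const, Real.deriv_rpow_const,
      show 1 - α - 1 = -α by ring, mul_div_cancel_left₀ _ hp]
  rw [Function.iterate_succ_apply', Function.iterate_one, hderiv.deriv_eq,
    Real.deriv_rpow_const]
  have : 0 < x ^ (-α - 1) := rpow_pos_of_pos hx _
  nlinarith

lemma strictConcaveOn_fairUtil (hα : 0 < α) :
    StrictConcaveOn ℝ {x | 0 ≤ x ∧ (1 ≤ α → 0 < x)} (fairUtil α) := by
  rcases lt_or_ge α 1 with h1 | h1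
  · convert strictConcaveOn_fairUtil_Ici hα h1 using 1
    ext x; simp [h1.not_ge]
  · convert strictConcaveOn_fairUtil_Ioi hα using 1
    ext x; simpa [h1] using fun hx : 0 < x => hx.le


lemma feasible_subset_capacityRegion : Feasible A C n ⊆ capacityRegion A C :=
  fun _ hL => ⟨hL.1, hL.2.2⟩

lemma convex_capacityRegion : Convex ℝ (capacityRegion A C) := by
  intro x hx y hy a b ha hb hab
  refine ⟨fun i => ?_, fun j => ?_⟩
  · simpa using add_nonneg (mul_nonneg ha (hx.1 i)) (mul_nonneg hb (hy.1 i))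
  · calc ∑ i, A j i * (a • x + b • y) i
        = a * ∑ i, A j i * x i + b * ∑ i, A j i * y i := by
          simp only [Pi.add_apply, Pi.smul_apply, smul_eq_mul, Finset.mul_sum,
            ← Finset.sum_add_distrib]
          exact Finset.sum_congr rfl fun i _ => by ring
      _ ≤ a * C j + b * C j := by gcongr; exacts [hx.2 j, hy.2 j]
      _ = C j := by rw [← add_mul, hab, one_mul]

lemma convex_feasible : Convex ℝ (Feasible A C n) := by
  intro x hx y hy a b ha hb hab
  have hxy := convex_capacityRegion (feasible_subset_capacityRegion hx)
    (feasible_subset_capacityRegion hy) ha hb hab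
  exact ⟨hxy.1, fun i hi => by simp [hx.2.1 i hi, hy.2.1 i hi], hxy.2⟩

lemma isClosed_capacityRegion : IsClosed (capacityRegion A C) := by
  simp only [capacityRegion, ofPred_and, ofPred_forall]
  exact (isClosed_iInter fun i => isClosed_le continuous_const (continuous_apply i)).inter
    (isClosed_iInter fun j => isClosed_le (by fun_prop) continuous_const)

lemma isCompact_capacityRegion (hA : ∀ j i, 0 ≤ A j i) (hAcol : ∀ i, ∃ j, A j i = 1) :
    IsCompact (capacityRegion A C) := by
  choose r hr using hAcol
  refine (isCompact_Icc (a := 0) (b := fun i => C (r i))).of_isClosed_subset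
    isClosed_capacityRegion fun L hL => ⟨hL.1, fun i => ?_⟩
  calc L i = A (r i) i * L i := by rw [hr i, one_mul]
    _ ≤ ∑ k, A (r i) k * L k :=
      Finset.single_le_sum (f := fun k => A (r i) k * L k)
        (fun k _ => mul_nonneg (hA _ k) (hL.1 k)) (Finset.mem_univ i)
    _ ≤ C (r i) := hL.2 _

lemma exists_pos_mem_capacityRegion (hC : ∀ j, 0 < C j) :
    ∃ g ∈ capacityRegion A C, ∀ i, 0 < g i := by
  have hsmall : ∀ j, ∀ᶠ c in 𝓝[>] (0 : ℝ), ∑ i, A j i * c ≤ C j := fun j =>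
    nhdsWithin_le_nhds <| (Continuous.tendsto (by fun_prop) 0).eventually_le_const
      (by simpa using hC j)
  obtain ⟨c, hcC, hc⟩ := ((eventually_all.2 hsmall).and self_mem_nhdsWithin).exists
  exact ⟨fun _ => c, ⟨fun _ => le_of_lt hc, hcC⟩, fun _ => hc⟩

lemma indicator_support_mem_feasible (hA : ∀ j i, 0 ≤ A j i) (hL : L ∈ capacityRegion A C) :
    (Function.support n).indicator L ∈ Feasible A C n := by
  refine ⟨fun i => indicator_nonneg (fun k _ => hL.1 k) i,
    fun i hi => indicator_of_notMem (by simpa using hi) _, fun j => ?_⟩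
  refine le_trans (Finset.sum_le_sum fun i _ => ?_) (hL.2 j)
  exact mul_le_mul_of_nonneg_left (indicator_le_self' (fun k _ => hL.1 k) i) (hA j i)

lemma indicator_support_apply_of_pos {i : Fin I} (hi : 0 < n i) :
    (Function.support n).indicator L i = L i :=
  indicator_of_mem (ne_of_gt hi) L

lemma totalUtil_indicator_support (hα : 0 < α) :
    totalUtil α κ n ((Function.support n).indicator L) = totalUtil α κ n L := by
  refine Finset.sum_congr rfl fun k _ => ?_
  by_cases hk : n k = 0
  · simp [hk, zero_rpow hα.ne']
  · rw [indicator_of_mem hk]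

lemma continuous_totalUtil_left (hα : 0 < α) (L : Fin I → ℝ) :
    Continuous fun n => totalUtil α κ n L :=
  continuous_finsetSum _ fun k _ =>
    (continuous_const.mul ((continuous_apply k).rpow_const fun _ => Or.inr hα.le)).mul
      continuous_const

lemma continuousAt_totalUtil (hα : 0 < α) (hn : ∀ k, 0 ≤ n k)
    (hLα : 1 ≤ α → ∀ k, 0 < n k → 0 < L k) : ContinuousAt (totalUtil α κ n) L := by
  refine tendsto_finsetSum _ fun k _ => ?_
  rcases (hn k).eq_or_lt with hk | hk
  · simp only [← hk, zero_rpow hα.ne', mul_zero, zero_mul]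
    exact tendsto_const_nhds
  · have hu : ContinuousAt (fun L : Fin I → ℝ => fairUtil α (L k)) L :=
      ContinuousAt.comp (f := fun L : Fin I → ℝ => L k)
        (continuousAt_fairUtil fun h => hLα h k hk) (continuous_apply k).continuousAt
    exact continuousAt_const.mul hu

lemma totalUtil_mono (hα : 0 < α) (hκ : ∀ k, 0 < κ k) (hn : ∀ k, 0 ≤ n k)
    (hL : ∀ k, 0 ≤ L k) (hLα : 1 ≤ α → ∀ k, 0 < n k → 0 < L k) (hLM : ∀ k, L k ≤ M k) :
    totalUtil α κ n L ≤ totalUtil α κ n M := by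
  refine Finset.sum_le_sum fun k _ => ?_
  rcases (hn k).eq_or_lt with hk | hk
  · simp [← hk, zero_rpow hα.ne']
  · exact mul_le_mul_of_nonneg_left
      (fairUtil_le_fairUtil hα (hL k) (fun h => hLα h k hk) (hLM k))
      (mul_nonneg (hκ k).le (rpow_nonneg (hn k) α))

lemma totalUtil_combo_lt (hα : 0 < α) (hκ : ∀ k, 0 < κ k) (hn : ∀ k, 0 ≤ n k)
    (hL : ∀ k, 0 ≤ L k) (hM : ∀ k, 0 ≤ M k) (hLα : 1 ≤ α → ∀ k, 0 < n k → 0 < L k)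
    (hMα : 1 ≤ α → ∀ k, 0 < n k → 0 < M k) {i : Fin I} (hi : 0 < n i) (hLM : L i ≠ M i)
    {a b : ℝ} (ha : 0 < a) (hb : 0 < b) (hab : a + b = 1) :
    a * totalUtil α κ n L + b * totalUtil α κ n M < totalUtil α κ n (a • L + b • M) := by
  have hmem : ∀ k, 0 < n k → L k ∈ {x | 0 ≤ x ∧ (1 ≤ α → 0 < x)} ∧
      M k ∈ {x | 0 ≤ x ∧ (1 ≤ α → 0 < x)} := fun k hk =>
    ⟨⟨hL k, fun h => hLα h k hk⟩, ⟨hM k, fun h => hMα h k hk⟩⟩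
  simp only [totalUtil, Finset.mul_sum, ← Finset.sum_add_distrib]
  refine Finset.sum_lt_sum (fun k _ => ?_) ⟨i, Finset.mem_univ i, ?_⟩
  · rcases (hn k).eq_or_lt with hk | hk
    · simp [← hk, zero_rpow hα.ne']
    · have := (strictConcaveOn_fairUtil hα).concaveOn.2 (hmem k hk).1 (hmem k hk).2
        ha.le hb.le hab
      simp only [smul_eq_mul, Pi.add_apply, Pi.smul_apply] at this ⊢
      linarith [mul_le_mul_of_nonneg_left this (mul_nonneg (hκ k).le (rpow_nonneg (hn k) α))]
  · have := (strictConcaveOn_fairUtil hα).2 (hmem i hi).1 (hmem i hi).2 hLM ha hb hab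
    simp only [smul_eq_mul, Pi.add_apply, Pi.smul_apply] at this ⊢
    linarith [mul_lt_mul_of_pos_left this (mul_pos (hκ i) (rpow_pos_of_pos hi α))]

lemma gfun_eq_bot (h1 : 1 ≤ α) {k : Fin I} (hk : 0 < n k) (hLk : L k = 0) :
    Gfun α κ n L = ⊥ :=
  if_pos ⟨h1, k, hk, hLk⟩

lemma gfun_eq_totalUtil (hα : 0 < α) (hn : ∀ k, 0 ≤ n k)
    (hLα : 1 ≤ α → ∀ k, 0 < n k → 0 < L k) : Gfun α κ n L = totalUtil α κ n L := by
  rw [Gfun, if_neg fun ⟨h1, k, hk, hLk⟩ => (hLα h1 k hk).ne' hLk]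
  split_ifs with h1 <;> refine EReal.coe_eq_coe_iff.2 (Finset.sum_congr rfl fun k _ => ?_) <;>
    rcases (hn k).eq_or_lt with hk | hk
  · simp [← hk, zero_rpow hα.ne']
  · simp [fairUtil, hk, h1]
  · simp [← hk, zero_rpow hα.ne']
  · simp [fairUtil, hk, h1, mul_div_assoc]

lemma IsAlloc.pos (hL : IsAlloc A C α κ n L) (hα : 0 < α) (hA : ∀ j i, 0 ≤ A j i)
    (hn : ∀ k, 0 ≤ n k) {g₀ : Fin I → ℝ} (hg₀ : g₀ ∈ capacityRegion A C)
    (hg₀pos : ∀ k, 0 < g₀ k) : 1 ≤ α → ∀ k, 0 < n k → 0 < L k := by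
  intro h1 k hk
  refine (hL.1.1 k).lt_of_ne' fun hLk => ?_
  have := hL.2 _ (indicator_support_mem_feasible (n := n) hA hg₀)
  rw [gfun_eq_bot h1 hk hLk, gfun_eq_totalUtil hα hn fun _ k hk => by
    rw [indicator_support_apply_of_pos hk]; exact hg₀pos k] at this
  exact EReal.coe_ne_bot _ (le_bot_iff.1 this)

lemma IsAlloc.totalUtil_le_of_mem (hL : IsAlloc A C α κ n L) (hα : 0 < α)
    (hn : ∀ k, 0 ≤ n k) (hLα : 1 ≤ α → ∀ k, 0 < n k → 0 < L k) (hM : M ∈ Feasible A C n)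
    (hMα : 1 ≤ α → ∀ k, 0 < n k → 0 < M k) : totalUtil α κ n M ≤ totalUtil α κ n L := by
  have := hL.2 M hM
  rwa [gfun_eq_totalUtil hα hn hMα, gfun_eq_totalUtil hα hn hLα, EReal.coe_le_coe_iff] at this

lemma IsAlloc.totalUtil_le (hL : IsAlloc A C α κ n L) (hα : 0 < α) (hA : ∀ j i, 0 ≤ A j i)
    (hn : ∀ k, 0 ≤ n k) (hLα : 1 ≤ α → ∀ k, 0 < n k → 0 < L k)
    (hM : M ∈ capacityRegion A C) (hMα : 1 ≤ α → ∀ k, 0 < n k → 0 < M k) :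
    totalUtil α κ n M ≤ totalUtil α κ n L := by
  rw [← totalUtil_indicator_support hα]
  exact hL.totalUtil_le_of_mem hα hn hLα (indicator_support_mem_feasible hA hM) fun h k hk => by
    rw [indicator_support_apply_of_pos hk]; exact hMα h k hk

lemma IsAlloc.apply_eq (hL : IsAlloc A C α κ n L) (hM : IsAlloc A C α κ n M) (hα : 0 < α)
    (hκ : ∀ k, 0 < κ k) (hn : ∀ k, 0 ≤ n k) (hLα : 1 ≤ α → ∀ k, 0 < n k → 0 < L k)
    (hMα : 1 ≤ α → ∀ k, 0 < n k → 0 < M k) {i : Fin I} (hi : 0 < n i) : L i = M i := by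
  by_contra hne
  set N := (1 / 2 : ℝ) • L + (1 / 2 : ℝ) • M
  have hN : N ∈ Feasible A C n :=
    convex_feasible hL.1 hM.1 (by norm_num) (by norm_num) (by norm_num)
  have hNα : 1 ≤ α → ∀ k, 0 < n k → 0 < N k := fun h k hk => by
    simp only [N, Pi.add_apply, Pi.smul_apply, smul_eq_mul]
    linarith [hLα h k hk, hMα h k hk]
  have hNL := hL.totalUtil_le_of_mem hα hn hLα hN hNα
  have hML := hL.totalUtil_le_of_mem hα hn hLα hM.1 hMα
  have hLM := hM.totalUtil_le_of_mem hα hn hMα hL.1 hLα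
  have hconc := totalUtil_combo_lt hα hκ hn hL.1.1 hM.1.1 hLα hMα hi hne
    (a := 1 / 2) (b := 1 / 2) (by norm_num) (by norm_num) (by norm_num)
  linarith

lemma isAlloc_of_forall_totalUtil_le (hα : 0 < α) (hn : ∀ k, 0 ≤ n k) {g₀ : Fin I → ℝ}
    (hg₀ : g₀ ∈ capacityRegion A C) (hg₀pos : ∀ k, 0 < g₀ k) (hL : L ∈ Feasible A C n)
    (hLα : 1 ≤ α → ∀ k, 0 < n k → 0 < L k)
    (hmax : ∀ g ∈ capacityRegion A C, (∀ k, 0 < g k) → totalUtil α κ n g ≤ totalUtil α κ n L) :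
    IsAlloc A C α κ n L := by
  refine ⟨hL, fun M hM => ?_⟩
  by_cases hMα : 1 ≤ α → ∀ k, 0 < n k → 0 < M k
  swap
  · push Not at hMα
    obtain ⟨h1, k, hk, hMk⟩ := hMα
    rw [gfun_eq_bot h1 hk (le_antisymm hMk (hM.1 k))]
    exact bot_le
  rw [gfun_eq_totalUtil hα hn hMα, gfun_eq_totalUtil hα hn hLα, EReal.coe_le_coe_iff]
  set g : ℝ → Fin I → ℝ := fun ε => (1 - ε) • M + ε • g₀
  have hg : Tendsto g (𝓝[>] 0) (𝓝 M) := by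
    have : Continuous g := by fun_prop
    simpa [g] using (this.tendsto 0).mono_left nhdsWithin_le_nhds
  refine le_of_tendsto ((continuousAt_totalUtil hα hn hMα).tendsto.comp hg) ?_
  filter_upwards [Ioo_mem_nhdsGT one_pos] with ε hε
  refine hmax _ (convex_capacityRegion (feasible_subset_capacityRegion hM) hg₀
    (by linarith [hε.2]) hε.1.le (by ring)) fun k => ?_
  simp only [g, Pi.add_apply, Pi.smul_apply, smul_eq_mul]
  exact add_pos_of_nonneg_of_pos (mul_nonneg (by linarith [hε.2]) (hM.1 k))
    (mul_pos hε.1 (hg₀pos k))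

lemma tendsto_totalUtil_update_nhdsGT_zero (h1 : 1 ≤ α) {k : Fin I} (hk : 0 < κ k * n k ^ α)
    (r : Fin I → ℝ) :
    Tendsto (fun t => totalUtil α κ n (Function.update r k t)) (𝓝[>] 0) atBot := by
  have hsplit : ∀ t, totalUtil α κ n (Function.update r k t) = κ k * n k ^ α * fairUtil α t +
      ∑ k' ∈ Finset.univ.erase k, κ k' * n k' ^ α * fairUtil α (r k') := fun t => by
    rw [totalUtil, ← Finset.add_sum_erase _ _ (Finset.mem_univ k), Function.update_self]
    exact congrArg _ (Finset.sum_congr rfl fun k' hk' => by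
      rw [Function.update_of_ne (Finset.ne_of_mem_erase hk')])
  simp only [hsplit]
  exact tendsto_atBot_add_const_right _ _ ((tendsto_fairUtil_nhdsGT_zero h1).const_mul_atBot hk)

end

section Limit
variable {α : ℝ} {I J : ℕ} {A : Fin J → Fin I → ℝ} {C : Fin J → ℝ} {κ : Fin I → ℝ}
  {Λ : (Fin I → ℝ) → Fin I → ℝ} {l : Filter (Fin I → ℝ)} [l.NeBot] {n₀ L g : Fin I → ℝ}

lemma totalUtil_le_of_tendsto_alloc_of_lt (hα : 0 < α) (hκ : ∀ k, 0 < κ k) (hA : ∀ j i, 0 ≤ A j i)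
    (hΛ : ∀ n : Fin I → ℝ, (∀ i, 0 ≤ n i) → IsAlloc A C α κ n (Λ n))
    (hg : g ∈ capacityRegion A C) (hgpos : ∀ k, 0 < g k) (hl : l ≤ 𝓝 n₀)
    (hln : ∀ᶠ n in l, ∀ k, 0 ≤ n k) (hΛL : Tendsto Λ l (𝓝 L)) {r : Fin I → ℝ}
    (hLr : ∀ k, L k < r k) : totalUtil α κ n₀ g ≤ totalUtil α κ n₀ r := by
  have hlt : ∀ᶠ n in l, ∀ k, Λ n k < r k := eventually_all.2 fun k =>
    (tendsto_pi_nhds.1 hΛL k).eventually (eventually_lt_nhds (hLr k))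
  refine le_of_tendsto_of_tendsto (((continuous_totalUtil_left hα g).tendsto n₀).mono_left hl)
    (((continuous_totalUtil_left hα r).tendsto n₀).mono_left hl) ?_
  filter_upwards [hln, hlt] with n hn hnr
  have hpos := (hΛ n hn).pos hα hA hn hg hgpos
  calc totalUtil α κ n g ≤ totalUtil α κ n (Λ n) :=
        (hΛ n hn).totalUtil_le hα hA hn hpos hg fun _ k _ => hgpos k
    _ ≤ totalUtil α κ n r := totalUtil_mono hα hκ hn (hΛ n hn).1.1 hpos fun k => (hnr k).le

lemma pos_of_tendsto_alloc (hα : 0 < α) (hκ : ∀ k, 0 < κ k) (hA : ∀ j i, 0 ≤ A j i)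
    (hΛ : ∀ n : Fin I → ℝ, (∀ i, 0 ≤ n i) → IsAlloc A C α κ n (Λ n))
    (hg : g ∈ capacityRegion A C) (hgpos : ∀ k, 0 < g k) (hl : l ≤ 𝓝 n₀)
    (hln : ∀ᶠ n in l, ∀ k, 0 ≤ n k) (hΛL : Tendsto Λ l (𝓝 L)) (hL : ∀ k, 0 ≤ L k) :
    1 ≤ α → ∀ k, 0 < n₀ k → 0 < L k := by
  intro h1 k hk
  refine (hL k).lt_of_ne' fun hLk => ?_
  have hbot := tendsto_totalUtil_update_nhdsGT_zero h1 (mul_pos (hκ k) (rpow_pos_of_pos hk α))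
    (L + 1)
  obtain ⟨t, ht, htpos⟩ :=
    ((hbot.eventually (eventually_lt_atBot (totalUtil α κ n₀ g))).and self_mem_nhdsWithin).exists
  refine ht.not_ge
    (totalUtil_le_of_tendsto_alloc_of_lt hα hκ hA hΛ hg hgpos hl hln hΛL fun k' => ?_)
  rcases eq_or_ne k' k with rfl | hk'
  · simpa [hLk] using htpos
  · simp [Function.update_of_ne hk']

lemma totalUtil_le_of_tendsto_alloc (hα : 0 < α) (hκ : ∀ k, 0 < κ k) (hA : ∀ j i, 0 ≤ A j i)
    (hΛ : ∀ n : Fin I → ℝ, (∀ i, 0 ≤ n i) → IsAlloc A C α κ n (Λ n))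
    (hg : g ∈ capacityRegion A C) (hgpos : ∀ k, 0 < g k) (hl : l ≤ 𝓝 n₀)
    (hln : ∀ᶠ n in l, ∀ k, 0 ≤ n k) (hΛL : Tendsto Λ l (𝓝 L)) (hn₀ : ∀ k, 0 ≤ n₀ k)
    (hL : ∀ k, 0 ≤ L k) : totalUtil α κ n₀ g ≤ totalUtil α κ n₀ L := by
  have hLα := pos_of_tendsto_alloc hα hκ hA hΛ hg hgpos hl hln hΛL hL
  have hr : Tendsto (fun ε : ℝ => L + ε • 1) (𝓝[>] 0) (𝓝 L) := by
    have : Continuous fun ε : ℝ => L + ε • 1 := by fun_prop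
    simpa using (this.tendsto 0).mono_left nhdsWithin_le_nhds
  refine ge_of_tendsto ((continuousAt_totalUtil hα hn₀ hLα).tendsto.comp hr) ?_
  filter_upwards [self_mem_nhdsWithin] with ε (hε : 0 < ε)
  exact totalUtil_le_of_tendsto_alloc_of_lt hα hκ hA hΛ hg hgpos hl hln hΛL fun k => by
    simpa using hε

lemma apply_eq_of_tendsto_alloc (hα : 0 < α) (hκ : ∀ k, 0 < κ k) (hA : ∀ j i, 0 ≤ A j i)
    (hΛ : ∀ n : Fin I → ℝ, (∀ i, 0 ≤ n i) → IsAlloc A C α κ n (Λ n))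
    (hg : g ∈ capacityRegion A C) (hgpos : ∀ k, 0 < g k) (hl : l ≤ 𝓝 n₀)
    (hln : ∀ᶠ n in l, ∀ k, 0 ≤ n k) (hΛL : Tendsto Λ l (𝓝 L)) (hn₀ : ∀ k, 0 ≤ n₀ k)
    (hL : L ∈ capacityRegion A C) {i : Fin I} (hi : 0 < n₀ i) : L i = Λ n₀ i := by
  have hLα := pos_of_tendsto_alloc hα hκ hA hΛ hg hgpos hl hln hΛL hL.1
  have hL'α : 1 ≤ α → ∀ k, 0 < n₀ k → 0 < (Function.support n₀).indicator L k := fun h k hk => by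
    rw [indicator_support_apply_of_pos hk]; exact hLα h k hk
  have hL' : IsAlloc A C α κ n₀ ((Function.support n₀).indicator L) :=
    isAlloc_of_forall_totalUtil_le hα hn₀ hg hgpos (indicator_support_mem_feasible hA hL) hL'α
      fun g' hg' hg'pos => by
        rw [totalUtil_indicator_support hα]
        exact totalUtil_le_of_tendsto_alloc hα hκ hA hΛ hg' hg'pos hl hln hΛL hn₀ hL.1
  have := hL'.apply_eq (hΛ n₀ hn₀) hα hκ hn₀ hL'α ((hΛ n₀ hn₀).pos hα hA hn₀ hg hgpos) hi
  rwa [indicator_support_apply_of_pos hi] at this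

end Limit

theorem stmt2_general {I J : ℕ}
    (A : Fin J → Fin I → ℝ) (hA01 : ∀ j i, A j i = 0 ∨ A j i = 1)
    (hAcol : ∀ i, ∃ j, A j i = 1)
    (C : Fin J → ℝ) (hC : ∀ j, 0 < C j)
    (α : ℝ) (hα : 0 < α) (κ : Fin I → ℝ) (hκ : ∀ i, 0 < κ i)
    (Λ : (Fin I → ℝ) → Fin I → ℝ)
    (hΛ : ∀ n : Fin I → ℝ, (∀ i, 0 ≤ n i) → IsAlloc A C α κ n (Λ n))
    (i : Fin I) :
    ContinuousOn (fun n => Λ n i) {n : Fin I → ℝ | (∀ k, 0 ≤ n k) ∧ 0 < n i} := by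
  have hA : ∀ j i, 0 ≤ A j i := fun j i => by rcases hA01 j i with h | h <;> simp [h]
  obtain ⟨g, hg, hgpos⟩ := exists_pos_mem_capacityRegion (A := A) hC
  rintro n₀ ⟨hn₀, hi⟩
  refine (tendsto_iff_ultrafilter _ _ _).2 fun U hU => ?_
  have hUn : ∀ᶠ n in (U : Filter (Fin I → ℝ)), ∀ k, 0 ≤ n k :=
    Filter.mem_of_superset (hU self_mem_nhdsWithin) fun n hn => hn.1
  obtain ⟨L, hL, hΛL⟩ := (isCompact_capacityRegion hA hAcol).ultrafilter_le_nhds (U.map Λ)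
    (le_principal_iff.2 (hUn.mono fun n hn => feasible_subset_capacityRegion (hΛ n hn).1))
  show Tendsto (fun n => Λ n i) U (𝓝 (Λ n₀ i))
  rw [← apply_eq_of_tendsto_alloc hα hκ hA hΛ hg hgpos (hU.trans nhdsWithin_le_nhds) hUn hΛL hn₀
    hL hi]
  exact ((continuous_apply i).tendsto L).comp hΛL

theorem stmt2 {I J : ℕ} (hI : 0 < I) (hJ : 0 < J)
    (A : Fin J → Fin I → ℝ) (hA01 : ∀ j i, A j i = 0 ∨ A j i = 1)
    (hAcol : ∀ i, ∃ j, A j i = 1) (hArank : LinearIndependent ℝ A)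
    (C : Fin J → ℝ) (hC : ∀ j, 0 < C j)
    (α : ℝ) (hα : 0 < α) (κ : Fin I → ℝ) (hκ : ∀ i, 0 < κ i)
    (Λ : (Fin I → ℝ) → Fin I → ℝ)
    (hΛ : ∀ n : Fin I → ℝ, (∀ i, 0 ≤ n i) → IsAlloc A C α κ n (Λ n))
    (i : Fin I) :
    ContinuousOn (fun n => Λ n i) {n : Fin I → ℝ | (∀ k, 0 ≤ n k) ∧ 0 < n i} :=
  stmt2_general A hA01 hAcol C hC α hα κ hκ Λ hΛ i
end
end

section
/- A state n ∈ ℝ₊^I is an invariant state if and only if there exists q ∈ ℝ₊^{J*} such that n_i = ρ_i ((Σ_{j∈J*} q_j A_{ji}) / κ_i)^{1/α} for all routes i. -/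
open Real Set

noncomputable section

/-!
The constant path at `n` is a fluid model solution exactly when `Λ(n)` serves every route of
`I₊(n)` at its load `ρ_i`, i.e. when `ρ` restricted to `I₊(n)` maximizes `G_n`. As `G_n` is a sum
of strictly concave α-fair utilities and the constraints are linear, this happens exactly when the
Karush–Kuhn–Tucker conditions hold there: the gradient `κ_i n_i^α ρ_i^{-α}` equals `(qᵀA)_i` for
some `q ≥ 0` carried by constraints that are tight at that point, and these are critically loaded
resources. Necessity is the first-order condition along feasible directions combined with Farkas'
lemma; sufficiency, together with uniqueness of the maximizer, is the strict tangent-line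
inequality of the utilities. Solving `κ_i n_i^α ρ_i^{-α} = (qᵀA)_i` for `n_i` gives the formula.
-/

open Matrix Filter Topology

def fairUtility (α x : ℝ) : ℝ := if α = 1 then Real.log x else x ^ (1 - α) / (1 - α)

theorem hasDerivAt_fairUtility (α : ℝ) {x : ℝ} (hx : 0 < x) :
    HasDerivAt (fairUtility α) (x ^ (-α)) x := by
  unfold fairUtility
  by_cases hα : α = 1
  · subst hα
    simpa [Real.rpow_neg_one] using Real.hasDerivAt_log hx.ne'
  · simp only [hα, if_false]
    refine ((Real.hasDerivAt_rpow_const (Or.inl hx.ne')).div_const (1 - α)).congr_deriv ?_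
    rw [sub_sub_cancel_left, mul_div_cancel_left₀ _ (sub_ne_zero.2 (Ne.symm hα))]

theorem strictAntiOn_deriv_fairUtility {α : ℝ} (hα : 0 < α) :
    StrictAntiOn (deriv (fairUtility α)) (Ioi 0) := by
  intro x hx y hy hxy
  rw [(hasDerivAt_fairUtility α hx).deriv, (hasDerivAt_fairUtility α hy).deriv]
  exact Real.rpow_lt_rpow_of_neg hx hxy (neg_neg_of_pos hα)

theorem strictConcaveOn_fairUtility_Ioi {α : ℝ} (hα : 0 < α) :
    StrictConcaveOn ℝ (Ioi 0) (fairUtility α) :=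
  (interior_Ioi (a := (0:ℝ)) ▸ strictAntiOn_deriv_fairUtility hα).strictConcaveOn_of_deriv
    (convex_Ioi 0) fun _ hx => (hasDerivAt_fairUtility α hx).continuousAt.continuousWithinAt

theorem strictConcaveOn_fairUtility_Ici {α : ℝ} (hα : 0 < α) (hα1 : α < 1) :
    StrictConcaveOn ℝ (Ici 0) (fairUtility α) := by
  refine (interior_Ici (a := (0:ℝ)) ▸ strictAntiOn_deriv_fairUtility hα).strictConcaveOn_of_deriv
    (convex_Ici 0) ?_
  have hpow : fairUtility α = fun x => x ^ (1 - α) / (1 - α) := by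
    funext x
    simp [fairUtility, hα1.ne]
  rw [hpow]
  exact ((Real.continuous_rpow_const (by linarith)).div_const _).continuousOn

theorem StrictConcaveOn.lt_add_mul_sub {D : Set ℝ} {f : ℝ → ℝ} {f' s t : ℝ}
    (hf : StrictConcaveOn ℝ D f) (hs : s ∈ D) (ht : t ∈ D) (hts : t ≠ s)
    (hd : HasDerivAt f f' s) :
    f t < f s + f' * (t - s) := by
  rcases hts.lt_or_gt with hlt | hlt
  · have hslope := hf.lt_slope_of_hasDerivAt ht hs hlt hd
    rw [slope_def_field, lt_div_iff₀ (sub_pos.2 hlt)] at hslope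
    linarith
  · have hslope := hf.slope_lt_of_hasDerivAt hs ht hlt hd
    rw [slope_def_field, div_lt_iff₀ (sub_pos.2 hlt)] at hslope
    linarith

theorem fairUtility_lt_tangent {α s t : ℝ} (hα : 0 < α) (hs : 0 < s) (ht : 0 ≤ t)
    (ht1 : 1 ≤ α → 0 < t) (hts : t ≠ s) :
    fairUtility α t < fairUtility α s + s ^ (-α) * (t - s) := by
  rcases lt_or_ge α 1 with hα1 | hα1
  · exact (strictConcaveOn_fairUtility_Ici hα hα1).lt_add_mul_sub hs.le ht hts
      (hasDerivAt_fairUtility α hs)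
  · exact (strictConcaveOn_fairUtility_Ioi hα).lt_add_mul_sub hs (ht1 hα1) hts
      (hasDerivAt_fairUtility α hs)

theorem exists_nonneg_sum_smul_eq_of_dotProduct_nonpos {𝕜 ι : Type*} [Field 𝕜] [LinearOrder 𝕜]
    [IsStrictOrderedRing 𝕜] [Fintype ι] :
    ∀ {k : ℕ} (a : Fin k → ι → 𝕜) (g : ι → 𝕜),
      (∀ d, (∀ j, a j ⬝ᵥ d ≤ 0) → g ⬝ᵥ d ≤ 0) → ∃ q : Fin k → 𝕜, 0 ≤ q ∧ g = ∑ j, q j • a j := by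
  intro k
  induction k with
  | zero =>
    intro a g h
    refine ⟨0, le_rfl, ?_⟩
    have hgg : g ⬝ᵥ g = 0 :=
      le_antisymm (h g finZeroElim) (Finset.sum_nonneg fun i _ => mul_self_nonneg (g i))
    simpa using dotProduct_self_eq_zero.1 hgg
  | succ k ih =>
    intro a g h
    have hsnoc : ∀ (q : Fin k → 𝕜) (c : 𝕜), 0 ≤ q → 0 ≤ c → 0 ≤ (Fin.snoc q c : Fin (k + 1) → 𝕜) :=
      fun q c hq hc j => Fin.lastCases (by simpa using hc) (fun j => by simpa using hq j) j
    by_cases hlast : ∀ d, (∀ j : Fin k, a j.castSucc ⬝ᵥ d ≤ 0) → g ⬝ᵥ d ≤ 0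
    · obtain ⟨q, hq, rfl⟩ := ih _ g hlast
      exact ⟨Fin.snoc q 0, hsnoc q 0 hq le_rfl, by simp [Fin.sum_univ_castSucc]⟩
    push Not at hlast
    obtain ⟨d₀, hd₀, hgd₀⟩ := hlast
    set a₀ := a (Fin.last k)
    have hw : 0 < a₀ ⬝ᵥ d₀ := by
      by_contra! hw
      exact hgd₀.not_ge (h d₀ (Fin.lastCases hw hd₀))
    -- Fourier–Motzkin elimination of `a₀`: `proj v ⬝ᵥ d₀ = 0`, and `proj` is adjoint to the
    -- projection of directions onto the hyperplane `a₀ ⬝ᵥ d = 0` along `d₀`.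
    set proj : (ι → 𝕜) → ι → 𝕜 := fun v => v - ((v ⬝ᵥ d₀) / (a₀ ⬝ᵥ d₀)) • a₀ with hproj
    have hproj_dot : ∀ v d, proj v ⬝ᵥ d = v ⬝ᵥ (d - ((a₀ ⬝ᵥ d) / (a₀ ⬝ᵥ d₀)) • d₀) := by
      intro v d
      simp only [hproj, sub_dotProduct, dotProduct_sub, smul_dotProduct, dotProduct_smul,
        smul_eq_mul, dotProduct_comm a₀ d]
      ring
    obtain ⟨q, hq, hgq⟩ := ih (fun j => proj (a j.castSucc)) (proj g) fun d hd => by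
      rw [hproj_dot]
      refine h _ (Fin.lastCases ?_ fun j => by rw [← hproj_dot]; exact hd j)
      simp only [dotProduct_sub, dotProduct_smul, smul_eq_mul]
      rw [div_mul_cancel₀ _ hw.ne', sub_self]
    set c := ((g ⬝ᵥ d₀) - ∑ j, q j * (a j.castSucc ⬝ᵥ d₀)) / (a₀ ⬝ᵥ d₀)
    have hc : 0 ≤ c := by
      have := Finset.sum_nonpos fun j (_ : j ∈ Finset.univ) =>
        mul_nonpos_of_nonneg_of_nonpos (hq j) (hd₀ j)
      exact div_nonneg (by linarith) hw.le
    refine ⟨Fin.snoc q c, hsnoc q c hq hc, ?_⟩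
    rw [Fin.sum_univ_castSucc]
    simp only [Fin.snoc_castSucc, Fin.snoc_last]
    rw [show g = proj g + ((g ⬝ᵥ d₀) / (a₀ ⬝ᵥ d₀)) • a₀ by simp [hproj], hgq]
    simp only [hproj, c, smul_sub, Finset.sum_sub_distrib, smul_smul, ← Finset.sum_smul, sub_div,
      Finset.sum_div, mul_div_assoc]
    module

theorem tendsto_add_mul_nhdsGE (a b : ℝ) :
    Tendsto (fun θ : ℝ => a + θ * b) (𝓝[≥] 0) (𝓝 a) := by
  have hc : Continuous fun θ : ℝ => a + θ * b := by fun_prop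
  simpa using tendsto_nhdsWithin_of_tendsto_nhds (hc.tendsto 0)

theorem eventually_add_mul_le {a b c : ℝ} (hac : a ≤ c) (hb : a = c → b ≤ 0) :
    ∀ᶠ θ in 𝓝[≥] (0:ℝ), a + θ * b ≤ c := by
  rcases hac.lt_or_eq with hac | rfl
  · exact ((tendsto_add_mul_nhdsGE a b).eventually (gt_mem_nhds hac)).mono fun _ => le_of_lt
  · filter_upwards [self_mem_nhdsWithin] with θ hθ
    nlinarith [hb rfl, show (0:ℝ) ≤ θ from hθ]

theorem eq_mul_div_rpow_one_div_iff {x ρ κ S α : ℝ} (hx : 0 ≤ x) (hρ : 0 < ρ) (hκ : 0 < κ)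
    (hS : 0 ≤ S) (hα : α ≠ 0) :
    x = ρ * (S / κ) ^ (1 / α) ↔ S = κ * x ^ α * ρ ^ (-α) := by
  calc x = ρ * (S / κ) ^ (1 / α) ↔ (S / κ) ^ α⁻¹ = x / ρ := by
        rw [one_div, eq_div_iff hρ.ne', mul_comm, eq_comm]
    _ ↔ S / κ = (x / ρ) ^ α := Real.rpow_inv_eq (div_nonneg hS hκ.le) (div_nonneg hx hρ.le) hα
    _ ↔ S = κ * x ^ α * ρ ^ (-α) := by
        rw [Real.div_rpow hx hρ.le, Real.rpow_neg hρ.le, div_eq_iff hκ.ne']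
        ring_nf

section Network

variable {I J : ℕ} {A : Matrix (Fin J) (Fin I) ℝ} {C : Fin J → ℝ} {α : ℝ} {κ n ρ : Fin I → ℝ}

def weightedUtility (α : ℝ) (κ n L : Fin I → ℝ) : ℝ :=
  ∑ i, if 0 < n i then κ i * n i ^ α * fairUtility α (L i) else 0

def utilityGradient (α : ℝ) (κ n ρ : Fin I → ℝ) : Fin I → ℝ :=
  fun i => κ i * n i ^ α * ρ i ^ (-α)

theorem Gfun_eq_weightedUtility {L : Fin I → ℝ} (h : ¬(1 ≤ α ∧ ∃ i, 0 < n i ∧ L i = 0)) :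
    Gfun α κ n L = weightedUtility α κ n L := by
  rw [Gfun, if_neg h, weightedUtility]
  split_ifs with hα
  · subst hα
    simp [fairUtility]
  · congr 1
    refine Finset.sum_congr rfl fun i _ => ?_
    simp [fairUtility, hα, mul_div_assoc]

theorem weightedUtility_indicator (L : Fin I → ℝ) :
    weightedUtility α κ n ({i | 0 < n i}.indicator L) = weightedUtility α κ n L := by
  refine Finset.sum_congr rfl fun i _ => ?_
  by_cases hi : 0 < n i <;> simp [hi]

theorem Gfun_indicator_of_pos (hρ : ∀ i, 0 < ρ i) :
    Gfun α κ n ({i | 0 < n i}.indicator ρ) = weightedUtility α κ n ρ := by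
  rw [Gfun_eq_weightedUtility, weightedUtility_indicator]
  rintro ⟨-, i, hi, h0⟩
  simp [hi, (hρ i).ne'] at h0

theorem utilityGradient_eq_zero (hα : 0 < α) (hn : 0 ≤ n) {i : Fin I} (hi : ¬0 < n i) :
    utilityGradient α κ n ρ i = 0 := by
  simp [utilityGradient, le_antisymm (not_lt.1 hi) (hn i), Real.zero_rpow hα.ne']

theorem indicator_mem_feasible (hA : ∀ j i, 0 ≤ A j i) (hρ : 0 ≤ ρ)
    (hAρ : ∀ j, ∑ i, A j i * ρ i ≤ C j) :
    {i | 0 < n i}.indicator ρ ∈ Feasible A C n := by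
  refine ⟨Set.indicator_nonneg fun i _ => hρ i, fun i hi => by simp [hi], fun j => ?_⟩
  refine le_trans (Finset.sum_le_sum fun i _ => ?_) (hAρ j)
  exact mul_le_mul_of_nonneg_left (Set.indicator_le_self' (fun i _ => hρ i) i) (hA j i)

theorem active_of_indicator (hA : ∀ j i, 0 ≤ A j i) (hρ : ∀ i, 0 < ρ i)
    (hAρ : ∀ j, ∑ i, A j i * ρ i ≤ C j) {j : Fin J}
    (hj : ∑ i, A j i * {i | 0 < n i}.indicator ρ i = C j) :
    ∑ i, A j i * ρ i = C j ∧ ∀ i, ¬0 < n i → A j i = 0 := by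
  have hle : ∀ i, A j i * {i | 0 < n i}.indicator ρ i ≤ A j i * ρ i := fun i =>
    mul_le_mul_of_nonneg_left (Set.indicator_le_self' (fun i _ => (hρ i).le) i) (hA j i)
  have hsum : ∑ i, A j i * {i | 0 < n i}.indicator ρ i = ∑ i, A j i * ρ i :=
    le_antisymm (Finset.sum_le_sum fun i _ => hle i) (hj ▸ hAρ j)
  refine ⟨hsum.symm.trans hj, fun i hi => ?_⟩
  have := (Finset.sum_eq_sum_iff_of_le fun i _ => hle i).1 hsum i (Finset.mem_univ i)
  simpa [hi, (hρ i).ne'] using this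

theorem eventually_indicator_add_smul_mem_feasible (hA : ∀ j i, 0 ≤ A j i) (hρ : ∀ i, 0 < ρ i)
    (hAρ : ∀ j, ∑ i, A j i * ρ i ≤ C j) {d : Fin I → ℝ}
    (hd : ∀ j, ∑ i, A j i * {i | 0 < n i}.indicator ρ i = C j → ∑ i, A j i * d i ≤ 0)
    (hd0 : ∀ i, ¬0 < n i → d i = 0) :
    ∀ᶠ θ in 𝓝[≥] (0:ℝ), {i | 0 < n i}.indicator ρ + θ • d ∈ Feasible A C n ∧
      ∀ i, 0 < n i → 0 < ({i | 0 < n i}.indicator ρ + θ • d) i := by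
  set L := {i | 0 < n i}.indicator ρ
  have hL : L ∈ Feasible A C n := indicator_mem_feasible hA (fun i => (hρ i).le) hAρ
  have hoff : ∀ θ : ℝ, ∀ i, ¬0 < n i → (L + θ • d) i = 0 := fun θ i hi => by
    simp [L, hi, hd0 i hi]
  have hpos : ∀ᶠ θ in 𝓝[≥] (0:ℝ), ∀ i, 0 < n i → 0 < (L + θ • d) i := by
    refine eventually_all.2 fun i => ?_
    by_cases hi : 0 < n i
    · have hLi : 0 < L i := by simp [L, hi, hρ i]
      filter_upwards [(tendsto_add_mul_nhdsGE (L i) (d i)).eventually (lt_mem_nhds hLi)]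
        with θ hθ _
      simpa using hθ
    · exact Eventually.of_forall fun _ h => absurd h hi
  have hrows : ∀ᶠ θ in 𝓝[≥] (0:ℝ), ∀ j, ∑ i, A j i * (L + θ • d) i ≤ C j := by
    refine eventually_all.2 fun j => ?_
    have hexp : ∀ θ : ℝ, ∑ i, A j i * (L + θ • d) i
        = ∑ i, A j i * L i + θ * ∑ i, A j i * d i := fun θ => by
      simp only [Pi.add_apply, Pi.smul_apply, smul_eq_mul, mul_add, Finset.sum_add_distrib,
        Finset.mul_sum, mul_left_comm]
    simpa only [hexp] using eventually_add_mul_le (hL.2.2 j) (hd j)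
  filter_upwards [hpos, hrows] with θ hθpos hθrows
  refine ⟨⟨fun i => ?_, fun i hi => hoff θ i (by simp [hi]), hθrows⟩, hθpos⟩
  by_cases hi : 0 < n i
  · exact (hθpos i hi).le
  · exact (hoff θ i hi).ge

theorem hasDerivAt_weightedUtility_indicator_add_smul (hα : 0 < α) (hn : 0 ≤ n)
    (hρ : ∀ i, 0 < ρ i) (d : Fin I → ℝ) :
    HasDerivAt (fun θ : ℝ => weightedUtility α κ n ({i | 0 < n i}.indicator ρ + θ • d))
      (utilityGradient α κ n ρ ⬝ᵥ d) 0 := by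
  unfold weightedUtility dotProduct
  refine HasDerivAt.fun_sum fun i _ => ?_
  by_cases hi : 0 < n i
  · have hLi : {i | 0 < n i}.indicator ρ i = ρ i := Set.indicator_of_mem (s := {i | 0 < n i}) hi ρ
    simp only [hi, if_true, Pi.add_apply, Pi.smul_apply, smul_eq_mul, hLi]
    have hline : HasDerivAt (fun θ : ℝ => ρ i + θ * d i) (d i) 0 := by
      simpa using ((hasDerivAt_id (0:ℝ)).mul_const (d i)).const_add (ρ i)
    have hcomp := (hasDerivAt_fairUtility α (hρ i)).comp_of_eq 0 hline (by simp)
    exact (hcomp.const_mul (κ i * n i ^ α)).congr_deriv (by simp only [utilityGradient]; ring)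
  · simpa [hi, utilityGradient_eq_zero hα hn hi] using hasDerivAt_const (0:ℝ) (0:ℝ)

theorem utilityGradient_dotProduct_nonpos (hA : ∀ j i, 0 ≤ A j i) (hα : 0 < α) (hn : 0 ≤ n)
    (hρ : ∀ i, 0 < ρ i) (hAρ : ∀ j, ∑ i, A j i * ρ i ≤ C j)
    (hopt : IsAlloc A C α κ n ({i | 0 < n i}.indicator ρ)) {d : Fin I → ℝ}
    (hd : ∀ j, ∑ i, A j i * {i | 0 < n i}.indicator ρ i = C j → ∑ i, A j i * d i ≤ 0)
    (hd0 : ∀ i, ¬0 < n i → d i = 0) :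
    utilityGradient α κ n ρ ⬝ᵥ d ≤ 0 := by
  set f := fun θ : ℝ => weightedUtility α κ n ({i | 0 < n i}.indicator ρ + θ • d)
  have hmax : IsLocalMaxOn f (Ici 0) 0 := by
    filter_upwards [eventually_indicator_add_smul_mem_feasible hA hρ hAρ hd hd0]
      with θ ⟨hfeas, hpos⟩
    have hle := hopt.2 _ hfeas
    rw [Gfun_eq_weightedUtility fun ⟨_, i, hi, h0⟩ => (hpos i hi).ne' h0,
      Gfun_indicator_of_pos hρ, EReal.coe_le_coe_iff] at hle
    simpa [f, weightedUtility_indicator] using hle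
  have h1 : (1:ℝ) ∈ posTangentConeAt (Ici 0) 0 := by
    rw [one_mem_posTangentConeAt_iff_frequently]
    exact (eventually_mem_nhdsWithin (s := Ioi (0:ℝ)) (a := 0)).frequently.mono
      fun _ hx => mem_Ici.2 (le_of_lt hx)
  simpa using hmax.hasFDerivWithinAt_nonpos
    (hasDerivAt_weightedUtility_indicator_add_smul hα hn hρ d).hasFDerivAt.hasFDerivWithinAt h1

theorem exists_dual_of_isAlloc_indicator (hA : ∀ j i, 0 ≤ A j i) (hα : 0 < α) (hn : 0 ≤ n)
    (hρ : ∀ i, 0 < ρ i) (hAρ : ∀ j, ∑ i, A j i * ρ i ≤ C j)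
    (hopt : IsAlloc A C α κ n ({i | 0 < n i}.indicator ρ)) :
    ∃ q : Fin J → ℝ, 0 ≤ q ∧ (∀ j, q j ≠ 0 → ∑ i, A j i * ρ i = C j) ∧
      q ᵥ* A = utilityGradient α κ n ρ := by
  set L := {i | 0 < n i}.indicator ρ
  have hact := fun j => active_of_indicator (n := n) hA hρ hAρ (j := j)
  set a : Fin J → Fin I → ℝ := fun j => if ∑ i, A j i * L i = C j then A j else 0
  obtain ⟨q, hq, hg⟩ := exists_nonneg_sum_smul_eq_of_dotProduct_nonpos a
      (utilityGradient α κ n ρ) fun d hd => by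
    have hdot : utilityGradient α κ n ρ ⬝ᵥ d =
        utilityGradient α κ n ρ ⬝ᵥ {i | 0 < n i}.indicator d := by
      refine Finset.sum_congr rfl fun i _ => ?_
      by_cases hi : 0 < n i
      · simp [hi]
      · simp [utilityGradient_eq_zero hα hn hi]
    rw [hdot]
    refine utilityGradient_dotProduct_nonpos hA hα hn hρ hAρ hopt (fun j hj => ?_)
      fun i hi => by simp [hi]
    have haj : a j = A j := if_pos hj
    refine le_of_eq_of_le (Finset.sum_congr rfl fun i _ => ?_) (hd j)
    by_cases hi : 0 < n i
    · simp [haj, hi]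
    · simp [haj, hi, (hact j hj).2 i hi]
  refine ⟨fun j => if ∑ i, A j i * L i = C j then q j else 0, fun j => ?_, fun j hj => ?_, ?_⟩
  · dsimp only
    split_ifs
    exacts [hq j, le_rfl]
  · by_cases hj' : ∑ i, A j i * L i = C j
    · exact (hact j hj').1
    · simp [hj'] at hj
  · ext i
    rw [hg, Finset.sum_apply, vecMul, dotProduct]
    refine Finset.sum_congr rfl fun j _ => ?_
    by_cases hj : ∑ i, A j i * L i = C j <;> simp [a, hj]

theorem vecMul_dotProduct_le {q : Fin J → ℝ} {L : Fin I → ℝ} (hq : 0 ≤ q)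
    (hqρ : ∀ j, q j ≠ 0 → ∑ i, A j i * ρ i = C j) (hL : ∀ j, ∑ i, A j i * L i ≤ C j) :
    (q ᵥ* A) ⬝ᵥ L ≤ (q ᵥ* A) ⬝ᵥ ρ := by
  rw [← dotProduct_mulVec, ← dotProduct_mulVec]
  refine Finset.sum_le_sum fun j _ => ?_
  by_cases hqj : q j = 0
  · simp [hqj]
  · exact mul_le_mul_of_nonneg_left ((hL j).trans (hqρ j hqj).ge) (hq j)

theorem eq_of_Gfun_indicator_le (hα : 0 < α) (hκ : ∀ i, 0 < κ i) (hn : 0 ≤ n)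
    (hρ : ∀ i, 0 < ρ i) {q : Fin J → ℝ} (hq : 0 ≤ q)
    (hqρ : ∀ j, q j ≠ 0 → ∑ i, A j i * ρ i = C j) (hg : q ᵥ* A = utilityGradient α κ n ρ)
    {L : Fin I → ℝ} (hL : L ∈ Feasible A C n)
    (hle : Gfun α κ n ({i | 0 < n i}.indicator ρ) ≤ Gfun α κ n L) :
    ∀ i, 0 < n i → L i = ρ i := by
  by_contra! ⟨i₀, hi₀, hne⟩
  rw [Gfun_indicator_of_pos hρ] at hle
  have hnb : ¬(1 ≤ α ∧ ∃ i, 0 < n i ∧ L i = 0) := fun hb => by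
    rw [Gfun, if_pos hb] at hle
    exact EReal.coe_ne_bot _ (le_bot_iff.1 hle)
  rw [Gfun_eq_weightedUtility hnb, EReal.coe_le_coe_iff] at hle
  set g := utilityGradient α κ n ρ
  have hterm : ∀ i, 0 < n i → L i ≠ ρ i → κ i * n i ^ α * fairUtility α (L i) <
      κ i * n i ^ α * fairUtility α (ρ i) + g i * (L i - ρ i) :=
    fun i hi hne => by
      have htan := fairUtility_lt_tangent hα (hρ i) (hL.1 i)
        (fun h => (hL.1 i).lt_of_ne fun h0 => hnb ⟨h, i, hi, h0.symm⟩) hne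
      have hw : 0 < κ i * n i ^ α := mul_pos (hκ i) (Real.rpow_pos_of_pos hi α)
      calc κ i * n i ^ α * fairUtility α (L i)
          < κ i * n i ^ α * (fairUtility α (ρ i) + ρ i ^ (-α) * (L i - ρ i)) :=
            mul_lt_mul_of_pos_left htan hw
        _ = _ := by simp only [g, utilityGradient]; ring
  have hsum : weightedUtility α κ n L < weightedUtility α κ n ρ + (g ⬝ᵥ L - g ⬝ᵥ ρ) := by
    rw [← dotProduct_sub, weightedUtility, weightedUtility, dotProduct, ← Finset.sum_add_distrib]
    refine Finset.sum_lt_sum (fun i _ => ?_)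
      ⟨i₀, Finset.mem_univ _, by simpa [hi₀] using hterm i₀ hi₀ hne⟩
    by_cases hi : 0 < n i
    · rcases eq_or_ne (L i) (ρ i) with h | h
      · simp [hi, h]
      · simpa [hi] using (hterm i hi h).le
    · simp [hi, g, utilityGradient_eq_zero hα hn hi]
  have hdual : g ⬝ᵥ L ≤ g ⬝ᵥ ρ := hg ▸ vecMul_dotProduct_le hq hqρ hL.2.2
  linarith

theorem isFluidSol_const_iff {ν μ : Fin I → ℝ} {Λ : (Fin I → ℝ) → Fin I → ℝ}
    (hμ : ∀ i, 0 < μ i) (hload : ∀ j, ∑ i, A j i * (ν i / μ i) ≤ C j) (hn : 0 ≤ n) :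
    IsFluidSol A C ν μ Λ (fun _ => n) ↔ ∀ i, 0 < n i → Λ n i = ν i / μ i := by
  constructor
  · rintro ⟨-, -, hsol⟩ i hi
    have hderiv := ((hsol 0 self_mem_Ici fun _ => differentiableWithinAt_const _).1 i).1 hi
    have h0 := (uniqueDiffOn_Ici 0 0 self_mem_Ici).eq_deriv _ hderiv (hasDerivWithinAt_const _ _ _)
    rw [eq_div_iff (hμ i).ne']
    linarith
  · intro hΛ
    refine ⟨fun i T _ ε hε => ⟨1, one_pos, fun m a b _ _ _ => by simpa using hε⟩,
      fun _ _ => hn, fun t _ _ => ⟨fun i => ⟨fun hi => ?_, fun _ => hasDerivWithinAt_const _ _ _⟩,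
      fun j => le_of_eq_of_le (Finset.sum_congr rfl fun i _ => ?_) (hload j)⟩⟩
    · rw [hΛ i hi, mul_div_cancel₀ _ (hμ i).ne', sub_self]
      exact hasDerivWithinAt_const _ _ _
    · by_cases hi : 0 < n i
      · simp [hi, hΛ i hi]
      · simp [hi]

theorem eqOn_iff_exists_dual_of_isAlloc (hA : ∀ j i, 0 ≤ A j i) (hα : 0 < α)
    (hκ : ∀ i, 0 < κ i) (hn : 0 ≤ n) (hρ : ∀ i, 0 < ρ i) (hAρ : ∀ j, ∑ i, A j i * ρ i ≤ C j)
    {L : Fin I → ℝ} (hL : IsAlloc A C α κ n L) :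
    (∀ i, 0 < n i → L i = ρ i) ↔ ∃ q : Fin J → ℝ, 0 ≤ q ∧
      (∀ j, q j ≠ 0 → ∑ i, A j i * ρ i = C j) ∧ q ᵥ* A = utilityGradient α κ n ρ := by
  refine ⟨fun hLρ => ?_, fun ⟨q, hq, hqρ, hg⟩ => eq_of_Gfun_indicator_le hα hκ hn hρ hq hqρ hg
    hL.1 (hL.2 _ (indicator_mem_feasible hA (fun i => (hρ i).le) hAρ))⟩
  have hL_eq : L = {i | 0 < n i}.indicator ρ := funext fun i => by
    by_cases hi : 0 < n i
    · simp [hi, hLρ i hi]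
    · simp [hi, hL.1.2.1 i (le_antisymm (not_lt.1 hi) (hn i))]
  exact exists_dual_of_isAlloc_indicator hA hα hn hρ hAρ (hL_eq ▸ hL)

end Network

theorem stmt6_general {I J : ℕ}
    (A : Fin J → Fin I → ℝ) (hA01 : ∀ j i, A j i = 0 ∨ A j i = 1)
    (C : Fin J → ℝ)
    (α : ℝ) (hα : 0 < α) (κ : Fin I → ℝ) (hκ : ∀ i, 0 < κ i)
    (ν μ : Fin I → ℝ) (hν : ∀ i, 0 < ν i) (hμ : ∀ i, 0 < μ i)
    (hload : ∀ j, (∑ i, A j i * (ν i / μ i)) ≤ C j)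
    (Λ : (Fin I → ℝ) → Fin I → ℝ)
    (hΛ : ∀ n : Fin I → ℝ, (∀ i, 0 ≤ n i) → IsAlloc A C α κ n (Λ n))
    (n : Fin I → ℝ) (hn : ∀ i, 0 ≤ n i) :
    (IsFluidSol A C ν μ Λ fun _ => n) ↔
      ∃ q : Fin J → ℝ, (∀ j, 0 ≤ q j) ∧ (∀ j, j ∉ Jstar A C ν μ → q j = 0) ∧
        ∀ i, n i = (ν i / μ i) * ((∑ j, q j * A j i) / κ i) ^ (1 / α) := by
  have hρ : ∀ i, 0 < ν i / μ i := fun i => div_pos (hν i) (hμ i)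
  have hA : ∀ j i, 0 ≤ A j i := fun j i => by rcases hA01 j i with h | h <;> simp [h]
  rw [isFluidSol_const_iff hμ hload hn,
    eqOn_iff_exists_dual_of_isAlloc hA hα hκ hn hρ hload (hΛ n hn)]
  refine exists_congr fun q => and_congr_right fun hq => and_congr
    (forall_congr' fun j => not_imp_comm) (funext_iff.trans (forall_congr' fun i => ?_))
  exact (eq_mul_div_rpow_one_div_iff (hn i) (hρ i) (hκ i)
    (Finset.sum_nonneg fun j (_ : j ∈ Finset.univ) => mul_nonneg (hq j) (hA j i)) hα.ne').symm

theorem stmt6 {I J : ℕ} (hI : 0 < I) (hJ : 0 < J)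
    (A : Fin J → Fin I → ℝ) (hA01 : ∀ j i, A j i = 0 ∨ A j i = 1)
    (hAcol : ∀ i, ∃ j, A j i = 1) (hArank : LinearIndependent ℝ A)
    (C : Fin J → ℝ) (hC : ∀ j, 0 < C j)
    (α : ℝ) (hα : 0 < α) (κ : Fin I → ℝ) (hκ : ∀ i, 0 < κ i)
    (ν μ : Fin I → ℝ) (hν : ∀ i, 0 < ν i) (hμ : ∀ i, 0 < μ i)
    (hload : ∀ j, (∑ i, A j i * (ν i / μ i)) ≤ C j)
    (hJs : (Jstar A C ν μ).Nonempty)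
    (Λ : (Fin I → ℝ) → Fin I → ℝ)
    (hΛ : ∀ n : Fin I → ℝ, (∀ i, 0 ≤ n i) → IsAlloc A C α κ n (Λ n))
    (n : Fin I → ℝ) (hn : ∀ i, 0 ≤ n i) :
    (IsFluidSol A C ν μ Λ fun _ => n) ↔
      ∃ q : Fin J → ℝ, (∀ j, 0 ≤ q j) ∧ (∀ j, j ∉ Jstar A C ν μ → q j = 0) ∧
        ∀ i, n i = (ν i / μ i) * ((∑ j, q j * A j i) / κ i) ^ (1 / α) :=
  stmt6_general A hA01 C α hα κ hκ ν μ hν hμ hload Λ hΛ n hn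
end
end
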